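/- arXiv:1504.01796 — 2 statements merged into one kernel-verified Lean document; each statement's English description precedes it below -/
import Mathlib

section
/- Let $(S,\Sigma)$ be a measurable space, $\{\mu^{(n)}\}$ finite measures converging in total variation to a measure $\mu$, $f \in L^1(S;\mu)$, and $f^{(n)} \in L^1(S;\mu^{(n)})$ for each $n$. If $\liminf_{n\to\infty} \inf_{A \in \Sigma} (\int_A f^{(n)}\,d\mu^{(n)} - \int_A f\,d\mu) \ge 0$, then for each $\varepsilon > 0$, $\mu(\{s : f^{(n)}(s) \le f(s) - \varepsilon\}) \to 0$ as $n \to \infty$. -/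
/-!
Pass to measurable versions `g` of `f` and `G n` of `F n`; this changes `μ {F n ≤ f - ε}` by at
most the total-variation distance, because a `μs n`-null set has `μ`-measure at most that distance.
Cut the range of `g` into strips `[k ε/2, (k+1) ε/2)`. On the part `B` of `{G n ≤ g - ε}` over the
strip starting at `c`, we have `∫_B G n ∂μs n ≤ (c - ε/2) μs n B` and `∫_B g ∂μ ≥ c μ B`, so the
uniform Fatou inequality on `B` together with `|μs n B - μ B| ≤ t` gives
`(ε/2) μs n B ≤ (1 + |c|) t`. Hence every slice has vanishing `μ`-measure, and since the strips
partition the finite measure `μ`, dominated convergence for sums finishes the proof.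
-/

open MeasureTheory Filter Topology Set
open scoped ENNReal

lemma ENNReal.tendsto_tsum_of_dominated_convergence {β : Type*} {f : ℕ → β → ℝ≥0∞}
    {g bound : β → ℝ≥0∞} (h_sum : ∑' k, bound k ≠ ∞) (h_lim : ∀ k, Tendsto (f · k) atTop (𝓝 (g k)))
    (h_bound : ∀ n k, f n k ≤ bound k) :
    Tendsto (fun n => ∑' k, f n k) atTop (𝓝 (∑' k, g k)) := by
  let _ : MeasurableSpace β := ⊤
  simp only [← lintegral_count' measurable_from_top] at h_sum ⊢
  exact tendsto_lintegral_of_dominated_convergence bound (fun _ => measurable_from_top)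
    (fun n => ae_of_all _ (h_bound n)) h_sum (ae_of_all _ h_lim)

lemma tendsto_nhds_zero_of_eventually_le_mul {ι : Type*} {l : Filter ι} {x : ι → ℝ}
    (hx : ∀ i, 0 ≤ x i) {K : ℝ} (hK : 0 < K) (h : ∀ t > 0, ∀ᶠ i in l, x i ≤ K * t) :
    Tendsto x l (𝓝 0) := by
  refine tendsto_order.2 ⟨fun a ha => Eventually.of_forall fun i => ha.trans_le (hx i),
    fun a ha => ?_⟩
  filter_upwards [h (a / (2 * K)) (by positivity)] with i hi
  calc x i ≤ K * (a / (2 * K)) := hi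
    _ = a / 2 := by field_simp
    _ < a := half_lt_self ha

namespace MeasureTheory

variable {S : Type*} [MeasurableSpace S]

/-- By truncated subtraction one of the two summands vanishes, so this is `⨆ A, |ν A - μ A|`. -/
noncomputable def tvDist (ν μ : Measure S) : ℝ≥0∞ :=
  ⨆ (A : Set S) (_ : MeasurableSet A), (ν A - μ A) + (μ A - ν A)

lemma tvDist_comm (ν μ : Measure S) : tvDist ν μ = tvDist μ ν := by
  simp only [tvDist, add_comm]

lemma measure_le_add_tvDist (ν μ : Measure S) (E : Set S) : μ E ≤ ν E + tvDist ν μ := by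
  have hA := measurableSet_toMeasurable ν E
  calc μ E ≤ μ (toMeasurable ν E) := measure_mono (subset_toMeasurable ν E)
    _ ≤ ν (toMeasurable ν E) + tvDist ν μ := by
      rw [← tsub_le_iff_left]
      exact le_add_self.trans (le_iSup₂
        (f := fun (A : Set S) (_ : MeasurableSet A) => (ν A - μ A) + (μ A - ν A)) _ hA)
    _ = ν E + tvDist ν μ := by rw [measure_toMeasurable]

lemma isFiniteMeasure_of_tendsto_tvDist {ι : Type*} {l : Filter ι} [l.NeBot]
    {ν : ι → Measure S} [∀ i, IsFiniteMeasure (ν i)] {μ : Measure S}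
    (h : Tendsto (fun i => tvDist (ν i) μ) l (𝓝 0)) : IsFiniteMeasure μ := by
  obtain ⟨i, hi⟩ := (h.eventually (gt_mem_nhds zero_lt_one)).exists
  exact ⟨(measure_le_add_tvDist (ν i) μ univ).trans_lt
    (ENNReal.add_lt_top.2 ⟨measure_lt_top _ _, hi.trans ENNReal.one_lt_top⟩)⟩

lemma measureReal_le_add_of_tvDist_le {ν μ : Measure S} [IsFiniteMeasure ν] {t : ℝ} (ht : 0 ≤ t)
    (h : tvDist ν μ ≤ ENNReal.ofReal t) (E : Set S) : μ.real E ≤ ν.real E + t := by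
  have hE : μ E ≤ ν E + ENNReal.ofReal t := (measure_le_add_tvDist ν μ E).trans (by gcongr)
  rw [measureReal_def, measureReal_def, ← ENNReal.toReal_ofReal ht,
    ← ENNReal.toReal_add (measure_ne_top ν E) ENNReal.ofReal_ne_top]
  exact ENNReal.toReal_mono (by finiteness) hE

lemma measure_setOf_le_sub_le_add_tvDist {ν μ : Measure S} {F G f g : S → ℝ}
    (hFG : F =ᵐ[ν] G) (hfg : f =ᵐ[μ] g) (ε : ℝ) :
    μ {x | F x ≤ f x - ε} ≤ μ {x | G x ≤ g x - ε} + tvDist ν μ := by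
  have hsub : {x | F x ≤ f x - ε} ≤ᵐ[μ] ({x | G x ≤ g x - ε} ∪ {x | F x ≠ G x} : Set S) := by
    filter_upwards [hfg] with x hx hFx
    by_cases hG : F x = G x
    · left
      show G x ≤ g x - ε
      rwa [← hx, ← hG]
    · exact Or.inr hG
  have hnull : ν {x | F x ≠ G x} = 0 := ae_iff.1 hFG
  calc μ {x | F x ≤ f x - ε} ≤ μ ({x | G x ≤ g x - ε} ∪ {x | F x ≠ G x}) := measure_mono_ae hsub
    _ ≤ μ {x | G x ≤ g x - ε} + (ν {x | F x ≠ G x} + tvDist ν μ) :=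
      (measure_union_le _ _).trans (add_le_add_right (measure_le_add_tvDist ν μ _) _)
    _ = μ {x | G x ≤ g x - ε} + tvDist ν μ := by rw [hnull, zero_add]

lemma le_setIntegral_sub_of_le_iInf {ν μ : Measure S} {F f : S → ℝ} (hF : Integrable F ν)
    (hf : Integrable f μ) {t : ℝ}
    (ht : t ≤ ⨅ (A : Set S) (_ : MeasurableSet A), (∫ x in A, F x ∂ν - ∫ x in A, f x ∂μ))
    {A : Set S} (hA : MeasurableSet A) : t ≤ ∫ x in A, F x ∂ν - ∫ x in A, f x ∂μ := by
  have hbdd : BddBelow (range fun A : Set S =>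
      ⨅ (_ : MeasurableSet A), (∫ x in A, F x ∂ν - ∫ x in A, f x ∂μ)) := by
    refine ⟨-(∫ x, |F x| ∂ν + ∫ x, |f x| ∂μ), ?_⟩
    rintro _ ⟨A, rfl⟩
    dsimp only
    have hFA : |∫ x in A, F x ∂ν| ≤ ∫ x, |F x| ∂ν := abs_integral_le_integral_abs.trans
      (setIntegral_le_integral hF.abs (ae_of_all _ fun _ => abs_nonneg _))
    have hfA : |∫ x in A, f x ∂μ| ≤ ∫ x, |f x| ∂μ := abs_integral_le_integral_abs.trans
      (setIntegral_le_integral hf.abs (ae_of_all _ fun _ => abs_nonneg _))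
    by_cases hA : MeasurableSet A
    · rw [ciInf_pos hA]
      linarith [neg_abs_le (∫ x in A, F x ∂ν), le_abs_self (∫ x in A, f x ∂μ)]
    · rw [ciInf_neg hA, Real.sInf_empty, neg_nonpos]
      exact add_nonneg (integral_nonneg fun _ => abs_nonneg _)
        (integral_nonneg fun _ => abs_nonneg _)
  exact ht.trans ((ciInf_le hbdd A).trans (ciInf_pos hA).le)

lemma measureReal_le_of_le_setIntegral_sub {ν μ : Measure S} [IsFiniteMeasure ν]
    [IsFiniteMeasure μ] {g G : S → ℝ} {B : Set S} (hB : MeasurableSet B) {c r t : ℝ}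
    (hr : 0 < r) (ht : 0 ≤ t) (hgB : ∀ x ∈ B, c ≤ g x) (hGB : ∀ x ∈ B, G x ≤ c - r)
    (hg : IntegrableOn g B μ) (hG : IntegrableOn G B ν) (hdist : tvDist ν μ ≤ ENNReal.ofReal t)
    (hfatou : -t ≤ ∫ x in B, G x ∂ν - ∫ x in B, g x ∂μ) :
    μ.real B ≤ ((1 + |c|) / r + 1) * t := by
  have hνμ : ν.real B ≤ μ.real B + t :=
    measureReal_le_add_of_tvDist_le ht ((tvDist_comm μ ν).trans_le hdist) B
  have hμν : μ.real B ≤ ν.real B + t := measureReal_le_add_of_tvDist_le ht hdist B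
  have hGint : ∫ x in B, G x ∂ν ≤ ν.real B * (c - r) := by
    simpa [setIntegral_const] using
      setIntegral_mono_on hG (integrableOn_const (measure_ne_top ν B)) hB hGB
  have hgint : μ.real B * c ≤ ∫ x in B, g x ∂μ := by
    simpa [setIntegral_const, mul_comm] using
      setIntegral_mono_on (integrableOn_const (measure_ne_top μ B)) hg hB hgB
  have hcross : c * (ν.real B - μ.real B) ≤ |c| * t := by
    calc c * (ν.real B - μ.real B) ≤ |c| * |ν.real B - μ.real B| := by
          rw [← abs_mul]; exact le_abs_self _
      _ ≤ |c| * t := by gcongr; exact abs_sub_le_iff.2 ⟨by linarith, by linarith⟩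
  have hν : ν.real B ≤ (1 + |c|) / r * t := by
    rw [div_mul_eq_mul_div, le_div_iff₀ hr]
    linarith
  linarith

variable {ν : ℕ → Measure S} {μ : Measure S} [∀ n, IsFiniteMeasure (ν n)] [IsFiniteMeasure μ]
  {g : S → ℝ} {G : ℕ → S → ℝ}

lemma tendsto_measure_of_uniform_fatou_on (htv : Tendsto (fun n => tvDist (ν n) μ) atTop (𝓝 0))
    (hg : Integrable g μ) (hG : ∀ n, Integrable (G n) (ν n)) {B : ℕ → Set S}
    (hB : ∀ n, MeasurableSet (B n))
    (hfatou : ∀ t > 0, ∀ᶠ n in atTop, -t ≤ ∫ x in B n, G n x ∂ν n - ∫ x in B n, g x ∂μ)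
    {c r : ℝ} (hr : 0 < r) (hgB : ∀ n, ∀ x ∈ B n, c ≤ g x)
    (hGB : ∀ n, ∀ x ∈ B n, G n x ≤ c - r) :
    Tendsto (fun n => μ (B n)) atTop (𝓝 0) := by
  rw [← ENNReal.tendsto_toReal_iff (fun n => measure_ne_top μ _) ENNReal.zero_ne_top,
    ENNReal.toReal_zero]
  refine tendsto_nhds_zero_of_eventually_le_mul (fun n => ENNReal.toReal_nonneg)
    (K := (1 + |c|) / r + 1) (by positivity) fun t ht => ?_
  filter_upwards [hfatou t ht, ENNReal.tendsto_nhds_zero.1 htv _ (ENNReal.ofReal_pos.2 ht)]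
    with n hfat hdist
  exact measureReal_le_of_le_setIntegral_sub (hB n) hr ht.le (hgB n) (hGB n) hg.integrableOn
    (hG n).integrableOn hdist hfat

theorem tendsto_measure_setOf_le_sub_of_uniform_fatou
    (htv : Tendsto (fun n => tvDist (ν n) μ) atTop (𝓝 0))
    (hg : Integrable g μ) (hG : ∀ n, Integrable (G n) (ν n))
    (hgm : Measurable g) (hGm : ∀ n, Measurable (G n))
    (hfatou : ∀ t > 0, ∀ᶠ n in atTop, ∀ A, MeasurableSet A →
      -t ≤ ∫ x in A, G n x ∂ν n - ∫ x in A, g x ∂μ)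
    {ε : ℝ} (hε : 0 < ε) :
    Tendsto (fun n => μ {x | G n x ≤ g x - ε}) atTop (𝓝 0) := by
  have hr : 0 < ε / 2 := half_pos hε
  let slab : ℤ → Set S := fun k => g ⁻¹' Ico (k • (ε / 2)) ((k + 1) • (ε / 2))
  let B : ℕ → ℤ → Set S := fun n k => {x | G n x ≤ g x - ε} ∩ slab k
  have hslab : ∀ k, MeasurableSet (slab k) := fun k => hgm measurableSet_Ico
  have hB : ∀ n k, MeasurableSet (B n k) := fun n k =>
    (measurableSet_le (hGm n) (hgm.sub_const ε)).inter (hslab k)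
  have hcover : ∀ n, {x | G n x ≤ g x - ε} ⊆ ⋃ k, B n k := by
    intro n x hx
    obtain ⟨k, hk⟩ := mem_iUnion.1 ((iUnion_Ico_zsmul hr).ge (mem_univ (g x)))
    exact mem_iUnion.2 ⟨k, hx, hk⟩
  have hslice : ∀ k, Tendsto (fun n => μ (B n k)) atTop (𝓝 0) := fun k =>
    tendsto_measure_of_uniform_fatou_on htv hg hG (fun n => hB n k)
      (fun t ht => (hfatou t ht).mono fun n hn => hn _ (hB n k)) hr
      (fun n x hx => hx.2.1) fun n x hx => by
        have hGx : G n x ≤ g x - ε := hx.1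
        have hgx := hx.2.2
        simp only [add_smul, one_smul] at hgx
        linarith
  have hslab_sum : ∑' k, μ (slab k) ≠ ∞ :=
    ne_top_of_le_ne_top (measure_ne_top μ (⋃ k, slab k))
      (tsum_meas_le_meas_iUnion_of_disjoint μ hslab
        ((pairwise_disjoint_Ico_zsmul (ε / 2)).mono fun _ _ h => h.preimage g))
  have hsum : Tendsto (fun n => ∑' k, μ (B n k)) atTop (𝓝 0) := by
    simpa using ENNReal.tendsto_tsum_of_dominated_convergence hslab_sum hslice
      fun n k => measure_mono inter_subset_right
  exact tendsto_of_tendsto_of_tendsto_of_le_of_le tendsto_const_nhds hsum (fun _ => zero_le)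
    fun n => (measure_mono (hcover n)).trans (measure_iUnion_le _)

end MeasureTheory

open MeasureTheory

/-- If the uniform Fatou inequality (1.1) holds for finite measures converging in total
variation, then `μ {s | F n s ≤ f s - ε} → 0` for every `ε > 0`. -/
theorem uniform_fatou_stmt2 {S : Type*} [MeasurableSpace S]
    (μs : ℕ → Measure S) (μ : Measure S) [∀ n, IsFiniteMeasure (μs n)]
    (htv : Tendsto (fun n => ⨆ (A : Set S) (_ : MeasurableSet A),
      (μs n A - μ A) + (μ A - μs n A)) atTop (𝓝 0))
    (f : S → ℝ) (F : ℕ → S → ℝ)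
    (hf : Integrable f μ) (hF : ∀ n, Integrable (F n) (μs n))
    (h : ∀ ε : ℝ, 0 < ε → ∀ᶠ n in atTop,
      -ε ≤ ⨅ (A : Set S) (_ : MeasurableSet A),
        (∫ s in A, F n s ∂(μs n) - ∫ s in A, f s ∂μ)) :
    ∀ ε : ℝ, 0 < ε →
      Tendsto (fun n => μ {s | F n s ≤ f s - ε}) atTop (𝓝 0) := by
  intro ε hε
  have htv' : Tendsto (fun n => tvDist (μs n) μ) atTop (𝓝 0) := htv
  have : IsFiniteMeasure μ := isFiniteMeasure_of_tendsto_tvDist htv'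
  obtain ⟨g, hgm, hfg⟩ := hf.aemeasurable
  choose G hGm hFG using fun n => (hF n).aemeasurable
  have hfatou : ∀ t > 0, ∀ᶠ n in atTop, ∀ A, MeasurableSet A →
      -t ≤ ∫ x in A, G n x ∂μs n - ∫ x in A, g x ∂μ := by
    intro t ht
    filter_upwards [h t ht] with n hn A hA
    rw [← integral_congr_ae (ae_restrict_of_ae (hFG n)),
      ← integral_congr_ae (ae_restrict_of_ae hfg)]
    exact le_setIntegral_sub_of_le_iInf (hF n) hf hn hA
  have hGg := tendsto_measure_setOf_le_sub_of_uniform_fatou htv' (hf.congr hfg)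
    (fun n => (hF n).congr (hFG n)) hgm hGm hfatou hε
  refine tendsto_of_tendsto_of_tendsto_of_le_of_le tendsto_const_nhds
    (by simpa using hGg.add htv') (fun _ => zero_le) fun n =>
      measure_setOf_le_sub_le_add_tvDist (hFG n) hfg ε
end

section
/- Let $(S,\Sigma)$ be a measurable space, $\{\mu^{(n)},\mu\}$ finite measures, $f \in L^1(S;\mu)$, and $f^{(n)} \in L^1(S;\mu^{(n)})$ for each $n$. Suppose (a) $\liminf_{n\to\infty} \inf_{A \in \Sigma} (\int_A f^{(n)}\,d\mu^{(n)} - \int_A f\,d\mu) \ge 0$, and (b) for each $\varepsilon>0$, $\mu(\{s: f^{(n)}(s) \le f(s)-\varepsilon\}) \to 0$. Then $\liminf_{K\to+\infty} \inf_{n\ge 1} \int_S f^{(n)}(s)\,\mathbf{1}\{f^{(n)}(s) \le -K\}\,\mu^{(n)}(ds) \ge 0$. -/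
/-!
For a fixed `n`, integrability of `F n` makes its lower tail integrals small, so only large `n`
matter. For large `n`, the set `{F n ≤ -K}` lies in `{F n ≤ f - 1} ∪ {f ≤ 1 - K}`, whose
`μ`-measure is small by (b) and by integrability of `f`. Replacing it by a measurable subset of
full `μs n`-measure, (a) bounds the `μs n`-integral of `F n` over it from below by the
`μ`-integral of `f` over a set of small `μ`-measure, which is small by absolute continuity.
-/

open MeasureTheory Filter Topology

lemma Filter.eventually_forall_of_eventually_prod_atTop {α : Type*} {l : Filter α}
    {P : ℕ → α → Prop} (h : ∀ n, ∀ᶠ x in l, P n x) (hprod : ∀ᶠ p in atTop ×ˢ l, P p.1 p.2) :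
    ∀ᶠ x in l, ∀ n, P n x := by
  obtain ⟨pa, hpa, pb, hpb, hP⟩ := eventually_prod_iff.1 hprod
  obtain ⟨N, hN⟩ := eventually_atTop.1 hpa
  have hsmall : ∀ᶠ x in l, ∀ n ∈ Set.Iio N, P n x :=
    (eventually_all_finite (Set.finite_Iio N)).2 fun n _ => h n
  filter_upwards [hsmall, hpb] with x hsmall hx n
  rcases lt_or_ge n N with hn | hn
  · exact hsmall n hn
  · exact hP (hN n hn) hx

namespace MeasureTheory

variable {S : Type*} [MeasurableSpace S]

lemma norm_setIntegral_le_integral_norm {E : Type*} [NormedAddCommGroup E] [NormedSpace ℝ E]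
    {ν : Measure S} {g : S → E} (hg : Integrable g ν) (A : Set S) :
    ‖∫ x in A, g x ∂ν‖ ≤ ∫ x, ‖g x‖ ∂ν :=
  (norm_integral_le_integral_norm _).trans
    (setIntegral_le_integral hg.norm (.of_forall fun _ => norm_nonneg _))

lemma le_setIntegral_sub_setIntegral_of_le_iInf {ν μ : Measure S} {g f : S → ℝ}
    (hg : Integrable g ν) (hf : Integrable f μ) {c : ℝ}
    (hc : c ≤ ⨅ (A : Set S) (_ : MeasurableSet A), (∫ x in A, g x ∂ν - ∫ x in A, f x ∂μ))
    {A : Set S} (hA : MeasurableSet A) : c ≤ ∫ x in A, g x ∂ν - ∫ x in A, f x ∂μ := by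
  have hbdd : BddBelow (Set.range fun A : Set S =>
      ⨅ (_ : MeasurableSet A), (∫ x in A, g x ∂ν - ∫ x in A, f x ∂μ)) := by
    refine ⟨-(∫ x, ‖g x‖ ∂ν + ∫ x, ‖f x‖ ∂μ), Set.forall_mem_range.2 fun B => ?_⟩
    have hnonneg : 0 ≤ ∫ x, ‖g x‖ ∂ν + ∫ x, ‖f x‖ ∂μ := by positivity
    refine Real.le_iInf (fun _ => ?_) (neg_nonpos.2 hnonneg)
    have hgB := norm_setIntegral_le_integral_norm hg B
    have hfB := norm_setIntegral_le_integral_norm hf B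
    rw [Real.norm_eq_abs, abs_le] at hgB hfB
    linarith [hgB.1, hfB.2]
  exact hc.trans ((ciInf_le hbdd A).trans_eq (ciInf_pos hA))

lemma Integrable.tendsto_measure_setOf_le_neg {ν : Measure S} {g : S → ℝ}
    (hg : Integrable g ν) : Tendsto (fun K : ℝ => ν {x | g x ≤ -K}) atTop (𝓝 0) := by
  have hanti : Antitone fun K : ℝ => {x | g x ≤ -K} :=
    fun K L hKL x (hx : g x ≤ -L) => (hx.trans (neg_le_neg hKL) : g x ≤ -K)
  have hempty : ⋂ K : ℝ, {x | g x ≤ -K} = ∅ :=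
    Set.eq_empty_of_forall_notMem fun x hx => by
      have : g x ≤ -(-g x + 1) := Set.mem_iInter.1 hx (-g x + 1)
      linarith
  have := tendsto_measure_iInter_atTop
    (fun K => hg.1.nullMeasurableSet_le aestronglyMeasurable_const) hanti
    ⟨1, (hg.measure_le_lt_top neg_one_lt_zero).ne⟩
  rwa [hempty, measure_empty] at this

lemma Integrable.tendsto_setIntegral_setOf_le_neg {ν : Measure S} {g : S → ℝ}
    (hg : Integrable g ν) :
    Tendsto (fun K : ℝ => ∫ x in {x | g x ≤ -K}, g x ∂ν) atTop (𝓝 0) :=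
  hg.tendsto_setIntegral_nhds_zero hg.tendsto_measure_setOf_le_neg

lemma eventually_neg_le_setIntegral_of_le_iInf {ι : Type*} {l : Filter ι}
    {ν : ι → Measure S} {μ : Measure S} {g : ι → S → ℝ} {f : S → ℝ} {T : ι → Set S}
    (hg : ∀ i, Integrable (g i) (ν i)) (hf : Integrable f μ)
    (hgf : ∀ ε : ℝ, 0 < ε → ∀ᶠ i in l,
      -ε ≤ ⨅ (A : Set S) (_ : MeasurableSet A), (∫ x in A, g i x ∂(ν i) - ∫ x in A, f x ∂μ))
    (hT : ∀ i, NullMeasurableSet (T i) (ν i)) (hμT : Tendsto (fun i => μ (T i)) l (𝓝 0))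
    {ε : ℝ} (hε : 0 < ε) : ∀ᶠ i in l, -ε ≤ ∫ x in T i, g i x ∂(ν i) := by
  choose A hAT hA hAT_ae using fun i => (hT i).exists_measurable_subset_ae_eq
  have hμA : Tendsto (fun i => μ (A i)) l (𝓝 0) :=
    tendsto_of_tendsto_of_tendsto_of_le_of_le tendsto_const_nhds hμT (fun _ => zero_le)
      fun i => measure_mono (hAT i)
  have hfA : ∀ᶠ i in l, -(ε / 2) ≤ ∫ x in A i, f x ∂μ :=
    (hf.tendsto_setIntegral_nhds_zero hμA).eventually_const_le (by linarith)
  filter_upwards [hgf (ε / 2) (half_pos hε), hfA] with i hi hfi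
  rw [← setIntegral_congr_set (hAT_ae i)]
  linarith [le_setIntegral_sub_setIntegral_of_le_iInf (hg i) hf hi (hA i)]

lemma tendsto_measure_setOf_le_neg_prod_atTop {μ : Measure S} {f : S → ℝ} {F : ℕ → S → ℝ}
    (hf : Integrable f μ) (hb : Tendsto (fun n => μ {x | F n x ≤ f x - 1}) atTop (𝓝 0)) :
    Tendsto (fun p : ℕ × ℝ => μ {x | F p.1 x ≤ -p.2}) (atTop ×ˢ atTop) (𝓝 0) := by
  have hsub : ∀ p : ℕ × ℝ,
      {x | F p.1 x ≤ -p.2} ⊆ {x | F p.1 x ≤ f x - 1} ∪ {x | f x ≤ -(p.2 - 1)} := by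
    intro p x (hx : F p.1 x ≤ -p.2)
    by_cases hx' : F p.1 x ≤ f x - 1
    · exact Or.inl hx'
    · exact Or.inr (show f x ≤ -(p.2 - 1) by linarith)
  have hshift : Tendsto (fun K : ℝ => K - 1) atTop atTop :=
    tendsto_atTop_add_const_right _ _ tendsto_id
  have hsum : Tendsto (fun p : ℕ × ℝ => μ {x | F p.1 x ≤ f x - 1} + μ {x | f x ≤ -(p.2 - 1)})
      (atTop ×ˢ atTop) (𝓝 0) := by
    simpa using (hb.comp tendsto_fst).add
      (hf.tendsto_measure_setOf_le_neg.comp (hshift.comp tendsto_snd))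
  exact tendsto_of_tendsto_of_tendsto_of_le_of_le tendsto_const_nhds hsum (fun _ => zero_le)
    fun p => (measure_mono (hsub p)).trans (measure_union_le _ _)

end MeasureTheory

theorem uniform_fatou_stmt3_general {S : Type*} [MeasurableSpace S]
    (μs : ℕ → Measure S) (μ : Measure S)
    (f : S → ℝ) (F : ℕ → S → ℝ)
    (hf : Integrable f μ) (hF : ∀ n, Integrable (F n) (μs n))
    (ha : ∀ ε : ℝ, 0 < ε → ∀ᶠ n in atTop,
      -ε ≤ ⨅ (A : Set S) (_ : MeasurableSet A),
        (∫ s in A, F n s ∂(μs n) - ∫ s in A, f s ∂μ))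
    (hb : ∀ ε : ℝ, 0 < ε →
      Tendsto (fun n => μ {s | F n s ≤ f s - ε}) atTop (𝓝 0)) :
    ∀ ε : ℝ, 0 < ε → ∃ K₀ : ℝ, ∀ K ≥ K₀, ∀ n,
      -ε ≤ ∫ s in {x | F n x ≤ -K}, F n s ∂(μs n) := by
  intro ε hε
  have hfixed : ∀ n, ∀ᶠ K in atTop, -ε ≤ ∫ s in {x | F n x ≤ -K}, F n s ∂(μs n) := fun n =>
    (hF n).tendsto_setIntegral_setOf_le_neg.eventually_const_le (neg_lt_zero.2 hε)
  have hlarge : ∀ᶠ p : ℕ × ℝ in atTop ×ˢ atTop,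
      -ε ≤ ∫ s in {x | F p.1 x ≤ -p.2}, F p.1 s ∂(μs p.1) :=
    eventually_neg_le_setIntegral_of_le_iInf (l := atTop ×ˢ atTop) (fun p => hF p.1) hf
      (fun δ hδ => (ha δ hδ).prod_inl atTop)
      (fun p => (hF p.1).1.nullMeasurableSet_le aestronglyMeasurable_const)
      (tendsto_measure_setOf_le_neg_prod_atTop hf (hb 1 one_pos)) hε
  exact eventually_atTop.1 (eventually_forall_of_eventually_prod_atTop hfixed hlarge)

/-- If the uniform Fatou inequality (1.1) and condition (1.2) hold for finite measures,
then the lower uniform integrability condition (1.4) holds. -/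
theorem uniform_fatou_stmt3 {S : Type*} [MeasurableSpace S]
    (μs : ℕ → Measure S) (μ : Measure S)
    [∀ n, IsFiniteMeasure (μs n)] [IsFiniteMeasure μ]
    (f : S → ℝ) (F : ℕ → S → ℝ)
    (hf : Integrable f μ) (hF : ∀ n, Integrable (F n) (μs n))
    (ha : ∀ ε : ℝ, 0 < ε → ∀ᶠ n in atTop,
      -ε ≤ ⨅ (A : Set S) (_ : MeasurableSet A),
        (∫ s in A, F n s ∂(μs n) - ∫ s in A, f s ∂μ))
    (hb : ∀ ε : ℝ, 0 < ε →
      Tendsto (fun n => μ {s | F n s ≤ f s - ε}) atTop (𝓝 0)) :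
    ∀ ε : ℝ, 0 < ε → ∃ K₀ : ℝ, ∀ K ≥ K₀, ∀ n,
      -ε ≤ ∫ s in {x | F n x ≤ -K}, F n s ∂(μs n) :=
  uniform_fatou_stmt3_general μs μ f F hf hF ha hb
end
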